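/- arXiv:2407.07613 — 4 statements merged into one kernel-verified Lean document; each statement's English description precedes it below -/
import Mathlib

section
/- Second-moment bound on the PLRS noise: under the stated setup, E[‖w‖²] ≤ η_c² σ² + (L_max − L_min)² σ² / 12 + (L_max − L_min)² ‖∇f(x)‖² / 12. -/
/-!
Write `G = ∇f(x)` and `w = ηc (g - G) + u g`. Expanding the square,
`‖w‖² = ηc² ‖g - G‖² + 2 ηc u ⟪g - G, g⟫ + u² ‖g‖²`. By independence the cross term has
expectation `E[u] E[⟪g - G, g⟫] = 0` and the last one `E[u²] E[‖g‖²]`, where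
`E[u²] = (Lmax - Lmin)² / 12` and `E[‖g‖²] = E[‖g - G‖²] + ‖G‖²`. Hence
`E[‖w‖²] = ηc² E[‖g - G‖²] + (Lmax - Lmin)² (E[‖g - G‖²] + ‖G‖²) / 12` exactly, and the
bound follows from `E[‖g - G‖²] ≤ σ²`.
-/

open MeasureTheory ProbabilityTheory
open scoped RealInnerProductSpace

namespace MeasureTheory.pdf.IsUniform

variable {Ω : Type*} [MeasurableSpace Ω] {μ : Measure Ω} {X : Ω → ℝ} {a b : ℝ}

lemma aemeasurable_of_Icc (hab : a < b) (hX : IsUniform X (Set.Icc a b) μ) :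
    AEMeasurable X μ :=
  hX.aemeasurable (by simp [hab]) (by simp)

lemma integral_comp_of_Icc (hab : a < b) (hX : IsUniform X (Set.Icc a b) μ) {φ : ℝ → ℝ}
    (hφ : Continuous φ) :
    ∫ ω, φ (X ω) ∂μ = (b - a)⁻¹ * ∫ x in a..b, φ x := by
  rw [← integral_map (hX.aemeasurable_of_Icc hab) hφ.aestronglyMeasurable, hX,
    ProbabilityTheory.cond, integral_smul_measure, Real.volume_Icc, ENNReal.toReal_inv,
    ENNReal.toReal_ofReal (sub_nonneg.2 hab.le), smul_eq_mul, integral_Icc_eq_integral_Ioc,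
    intervalIntegral.integral_of_le hab.le]

lemma integrable_comp_of_Icc (hab : a < b) (hX : IsUniform X (Set.Icc a b) μ) {φ : ℝ → ℝ}
    (hφ : Continuous φ) :
    Integrable (fun ω ↦ φ (X ω)) μ := by
  refine (integrable_map_measure hφ.aestronglyMeasurable (hX.aemeasurable_of_Icc hab)).1 ?_
  rw [hX, ProbabilityTheory.cond]
  exact (hφ.integrableOn_Icc).smul_measure (by simp [hab])

lemma memLp_two_of_Icc (hab : a < b) (hX : IsUniform X (Set.Icc a b) μ) : MemLp X 2 μ :=
  (memLp_two_iff_integrable_sq (hX.aemeasurable_of_Icc hab).aestronglyMeasurable).2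
    (hX.integrable_comp_of_Icc hab (continuous_pow 2))

lemma integral_eq_of_Icc (hab : a < b) (hX : IsUniform X (Set.Icc a b) μ) :
    ∫ ω, X ω ∂μ = (a + b) / 2 := by
  rw [hX.integral_comp_of_Icc hab (φ := fun x ↦ x) continuous_id, integral_id]
  field_simp [sub_ne_zero.2 hab.ne']
  ring

lemma integral_sq_eq_of_Icc (hab : a < b) (hX : IsUniform X (Set.Icc a b) μ) :
    ∫ ω, X ω ^ 2 ∂μ = (a ^ 2 + a * b + b ^ 2) / 3 := by
  rw [hX.integral_comp_of_Icc hab (continuous_pow 2), integral_pow]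
  field_simp [sub_ne_zero.2 hab.ne']
  ring

end MeasureTheory.pdf.IsUniform

section SecondMoment

variable {Ω E : Type*} [MeasurableSpace Ω] {μ : Measure Ω}
  [NormedAddCommGroup E] [InnerProductSpace ℝ E] {g : Ω → E}

lemma integral_norm_sq_eq_integral_norm_sub_integral_sq_add [IsProbabilityMeasure μ]
    [CompleteSpace E] (hg : MemLp g 2 μ) :
    ∫ ω, ‖g ω‖ ^ 2 ∂μ = ∫ ω, ‖g ω - ∫ ω', g ω' ∂μ‖ ^ 2 ∂μ + ‖∫ ω, g ω ∂μ‖ ^ 2 := by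
  set G := ∫ ω, g ω ∂μ
  have hg_int : Integrable g μ := hg.integrable one_le_two
  have h_inner : ∫ ω, ⟪g ω, G⟫ ∂μ = ‖G‖ ^ 2 := by
    simp_rw [real_inner_comm G]
    rw [integral_inner hg_int, real_inner_self_eq_norm_sq]
  have hg_sq : Integrable (fun ω ↦ ‖g ω‖ ^ 2) μ := hg.integrable_norm_pow two_ne_zero
  have h_int : Integrable (fun ω ↦ 2 * ⟪g ω, G⟫) μ := (hg_int.inner_const G).const_mul 2
  have h_int' : Integrable (fun ω ↦ ‖g ω‖ ^ 2 - 2 * ⟪g ω, G⟫) μ := hg_sq.sub h_int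
  simp_rw [norm_sub_sq_real]
  rw [integral_add h_int' (integrable_const _), integral_sub hg_sq h_int, integral_const_mul,
    h_inner, integral_const, probReal_univ, one_smul]
  ring

lemma norm_smul_sub_smul_add_smul_sq (a t : ℝ) (y z : E) :
    ‖a • y - a • z + t • y‖ ^ 2 =
      a ^ 2 * ‖y - z‖ ^ 2 + 2 * a * (t * ⟪y - z, y⟫) + t ^ 2 * ‖y‖ ^ 2 := by
  rw [← smul_sub, norm_add_sq_real, norm_smul, norm_smul, real_inner_smul_left,
    real_inner_smul_right, mul_pow, mul_pow, Real.norm_eq_abs, Real.norm_eq_abs, sq_abs, sq_abs]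
  ring

lemma ProbabilityTheory.IndepFun.integral_norm_smul_sub_smul_add_smul_sq [IsFiniteMeasure μ]
    [MeasurableSpace E] [BorelSpace E] {u : Ω → ℝ} (hindep : IndepFun u g μ) (hu : MemLp u 2 μ)
    (hu_mean : ∫ ω, u ω ∂μ = 0) (hg : MemLp g 2 μ) (a : ℝ) (z : E) :
    ∫ ω, ‖a • g ω - a • z + u ω • g ω‖ ^ 2 ∂μ =
      a ^ 2 * ∫ ω, ‖g ω - z‖ ^ 2 ∂μ + (∫ ω, u ω ^ 2 ∂μ) * ∫ ω, ‖g ω‖ ^ 2 ∂μ := by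
  have hu_int : Integrable u μ := hu.integrable one_le_two
  have hg_sq : Integrable (fun ω ↦ ‖g ω‖ ^ 2) μ := hg.integrable_norm_pow two_ne_zero
  have h_indep_cross : IndepFun u (fun ω ↦ ⟪g ω - z, g ω⟫) μ :=
    hindep.comp (φ := id) (ψ := fun y ↦ ⟪y - z, y⟫) measurable_id
      ((continuous_id.sub continuous_const).inner continuous_id).measurable
  have h_indep_sq : IndepFun (fun ω ↦ u ω ^ 2) (fun ω ↦ ‖g ω‖ ^ 2) μ :=
    hindep.comp (φ := fun t ↦ t ^ 2) (ψ := fun y ↦ ‖y‖ ^ 2) (by fun_prop) (by fun_prop)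
  have h_cross_int : Integrable (fun ω ↦ ⟪g ω - z, g ω⟫) μ := by
    simp only [inner_sub_left, real_inner_self_eq_norm_sq]
    exact hg_sq.sub ((hg.integrable one_le_two).const_inner z)
  have h_cross : ∫ ω, u ω * ⟪g ω - z, g ω⟫ ∂μ = 0 := by
    rw [h_indep_cross.integral_fun_mul_eq_mul_integral hu_int.1 h_cross_int.1, hu_mean, zero_mul]
  have i1 : Integrable (fun ω ↦ a ^ 2 * ‖g ω - z‖ ^ 2) μ :=
    ((hg.sub (memLp_const z)).integrable_norm_pow two_ne_zero).const_mul _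
  have i2 : Integrable (fun ω ↦ 2 * a * (u ω * ⟪g ω - z, g ω⟫)) μ :=
    (h_indep_cross.integrable_mul hu_int h_cross_int).const_mul _
  have i3 : Integrable (fun ω ↦ u ω ^ 2 * ‖g ω‖ ^ 2) μ :=
    h_indep_sq.integrable_mul hu.integrable_sq hg_sq
  have i12 : Integrable
      (fun ω ↦ a ^ 2 * ‖g ω - z‖ ^ 2 + 2 * a * (u ω * ⟪g ω - z, g ω⟫)) μ := i1.add i2
  simp_rw [norm_smul_sub_smul_add_smul_sq]
  rw [integral_add i12 i3, integral_add i1 i2, integral_const_mul, integral_const_mul,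
    h_cross, h_indep_sq.integral_fun_mul_eq_mul_integral hu.integrable_sq.1 hg_sq.1]
  ring

end SecondMoment

theorem plrs_noise_second_moment_general
    {Ω : Type} [MeasurableSpace Ω] (μ : Measure Ω) [IsProbabilityMeasure μ]
    {d : ℕ} (f : EuclideanSpace ℝ (Fin d) → ℝ) (x : EuclideanSpace ℝ (Fin d))
    (Lmin Lmax ηc σ : ℝ)
    (hLL : Lmin < Lmax)
    (hηc : ηc = (Lmin + Lmax) / 2)
    (u : Ω → ℝ) (g : Ω → EuclideanSpace ℝ (Fin d))
    (hu : pdf.IsUniform u (Set.Icc (Lmin - ηc) (Lmax - ηc)) μ volume)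
    (hindep : IndepFun u g μ)
    (hg_int : Integrable g μ)
    (hg2_int : Integrable (fun ω => ‖g ω‖ ^ 2) μ)
    (hg_mean : ∫ ω, g ω ∂μ = gradient f x)
    (hσ : ∫ ω, ‖g ω - gradient f x‖ ^ 2 ∂μ ≤ σ ^ 2) :
    ∫ ω, ‖ηc • g ω - ηc • gradient f x + u ω • g ω‖ ^ 2 ∂μ ≤
      ηc ^ 2 * σ ^ 2 + (Lmax - Lmin) ^ 2 * σ ^ 2 / 12
        + (Lmax - Lmin) ^ 2 * ‖gradient f x‖ ^ 2 / 12 := by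
  have hab : Lmin - ηc < Lmax - ηc := by linarith
  have hg : MemLp g 2 μ := (memLp_two_iff_integrable_sq_norm hg_int.1).2 hg2_int
  have hu_mean : ∫ ω, u ω ∂μ = 0 := by rw [hu.integral_eq_of_Icc hab, hηc]; ring
  have hu_sq : ∫ ω, u ω ^ 2 ∂μ = (Lmax - Lmin) ^ 2 / 12 := by
    rw [hu.integral_sq_eq_of_Icc hab, hηc]; ring
  rw [hindep.integral_norm_smul_sub_smul_add_smul_sq (hu.memLp_two_of_Icc hab) hu_mean hg,
    integral_norm_sq_eq_integral_norm_sub_integral_sq_add hg, hg_mean, hu_sq]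
  have hηc_sq := mul_le_mul_of_nonneg_left hσ (sq_nonneg ηc)
  have hspread := mul_le_mul_of_nonneg_left hσ (by positivity : 0 ≤ (Lmax - Lmin) ^ 2 / 12)
  linarith

/-- **Second-moment bound on the PLRS noise.** With `ηc = (Lmin + Lmax)/2`, `u` uniform on
`[Lmin - ηc, Lmax - ηc]`, `g` a stochastic gradient of `f` at `x` independent of `u` with
mean `∇f(x)` and `E[‖g - ∇f(x)‖²] ≤ σ²`, the PLRS noise `w = ηc • g - ηc • ∇f(x) + u • g`
satisfies `E[‖w‖²] ≤ ηc² σ² + (Lmax - Lmin)² σ² / 12 + (Lmax - Lmin)² ‖∇f(x)‖² / 12`. -/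
theorem plrs_noise_second_moment
    {Ω : Type} [MeasurableSpace Ω] (μ : Measure Ω) [IsProbabilityMeasure μ]
    {d : ℕ} (f : EuclideanSpace ℝ (Fin d) → ℝ) (x : EuclideanSpace ℝ (Fin d))
    (Lmin Lmax ηc σ : ℝ)
    (hLmin : 0 < Lmin) (hLL : Lmin < Lmax) (hLmax : Lmax < 1)
    (hηc : ηc = (Lmin + Lmax) / 2)
    (u : Ω → ℝ) (g : Ω → EuclideanSpace ℝ (Fin d))
    (hu : pdf.IsUniform u (Set.Icc (Lmin - ηc) (Lmax - ηc)) μ volume)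
    (hindep : IndepFun u g μ)
    (hg_int : Integrable g μ)
    (hg2_int : Integrable (fun ω => ‖g ω‖ ^ 2) μ)
    (hg_mean : ∫ ω, g ω ∂μ = gradient f x)
    (hσ : ∫ ω, ‖g ω - gradient f x‖ ^ 2 ∂μ ≤ σ ^ 2) :
    ∫ ω, ‖ηc • g ω - ηc • gradient f x + u ω • g ω‖ ^ 2 ∂μ ≤
      ηc ^ 2 * σ ^ 2 + (Lmax - Lmin) ^ 2 * σ ^ 2 / 12
        + (Lmax - Lmin) ^ 2 * ‖gradient f x‖ ^ 2 / 12 :=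
  plrs_noise_second_moment_general μ f x Lmin Lmax ηc σ hLL hηc u g hu hindep hg_int hg2_int hg_mean
    hσ
end

section
/- Per-step gradient-norm growth bound for the quadratic model under PLRS updates: suppose the symmetric matrix H has all eigenvalues in the interval [−γ₀, β] with 0 ≤ γ₀ ≤ β, and 0 < η with ηβ < 1. Let x' = x − (η + u) g where g ∈ ℝ^d satisfies ‖g − ∇f̃(x)‖ ≤ Q̃ and u ∈ ℝ. Then ‖∇f̃(x')‖ ≤ (1 + η γ₀ + β|u|) ‖∇f̃(x)‖ + β Q̃ (η + |u|). -/
open scoped RealInnerProductSpace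

lemma sym_op_norm_bound {d : ℕ}
    (A : EuclideanSpace ℝ (Fin d) →L[ℝ] EuclideanSpace ℝ (Fin d))
    (hA : ∀ a b : EuclideanSpace ℝ (Fin d), ⟪A a, b⟫ = ⟪a, A b⟫)
    (C : ℝ) (hC : 0 ≤ C)
    (hq : ∀ v : EuclideanSpace ℝ (Fin d), |⟪v, A v⟫| ≤ C * ‖v‖ ^ 2) :
    ∀ v : EuclideanSpace ℝ (Fin d), ‖A v‖ ≤ C * ‖v‖ := by
  have key : ∀ v w : EuclideanSpace ℝ (Fin d),
      ⟪A v, w⟫ ≤ C / 2 * (‖v‖ ^ 2 + ‖w‖ ^ 2) := by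
    intro v w
    have h1 := (abs_le.1 (hq (v + w))).2
    have h2 := (abs_le.1 (hq (v - w))).1
    have e1 : ⟪v + w, A (v + w)⟫ - ⟪v - w, A (v - w)⟫ = 4 * ⟪A v, w⟫ := by
      have hs : ⟪v, A w⟫ = ⟪A v, w⟫ := (hA v w).symm
      have hs2 : ⟪w, A v⟫ = ⟪A v, w⟫ := real_inner_comm _ _
      simp only [map_add, map_sub, inner_add_left, inner_add_right,
        inner_sub_left, inner_sub_right, hs, hs2]
      ring
    have pn : ‖v + w‖ ^ 2 = ‖v‖ ^ 2 + 2 * ⟪v, w⟫ + ‖w‖ ^ 2 := by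
      rw [@norm_add_sq_real]
    have pm : ‖v - w‖ ^ 2 = ‖v‖ ^ 2 - 2 * ⟪v, w⟫ + ‖w‖ ^ 2 := by
      rw [@norm_sub_sq_real]
    nlinarith [h1, h2]
  intro v
  by_cases hv : A v = 0
  · simp [hv]; positivity
  · have hAv : 0 < ‖A v‖ := norm_pos_iff.2 hv
    have hvne : v ≠ 0 := by rintro rfl; simp at hv
    have hvpos : 0 < ‖v‖ := norm_pos_iff.2 hvne
    have := key v ((‖v‖ / ‖A v‖) • A v)
    rw [real_inner_smul_right, real_inner_self_eq_norm_sq, norm_smul] at this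
    rw [Real.norm_eq_abs, abs_of_nonneg (by positivity : (0:ℝ) ≤ ‖v‖ / ‖A v‖)] at this
    have heq : ‖v‖ / ‖A v‖ * ‖A v‖ ^ 2 = ‖v‖ * ‖A v‖ := by
      field_simp
    have heq2 : (‖v‖ / ‖A v‖ * ‖A v‖) ^ 2 = ‖v‖ ^ 2 := by
      field_simp
    rw [heq, heq2] at this
    have : ‖v‖ * ‖A v‖ ≤ C * ‖v‖ ^ 2 := by nlinarith
    nlinarith

/-- **Per-step gradient-norm growth bound for the quadratic model under PLRS updates.**
For the quadratic `f̃(x) = c + ⟪bv, x - x₀⟫ + (1/2)⟪x - x₀, H (x - x₀)⟫` with symmetric `H`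
whose eigenvalues all lie in `[-γ₀, β]` (expressed via the quadratic form), `0 ≤ γ₀ ≤ β`,
`0 < η`, `η β < 1`: if `x' = x - (η + u) • g` with `‖g - ∇f̃(x)‖ ≤ Q̃`, then
`‖∇f̃(x')‖ ≤ (1 + η γ₀ + β |u|) ‖∇f̃(x)‖ + β Q̃ (η + |u|)`. -/
theorem plrs_quadratic_gradient_growth {d : ℕ}
    (H : EuclideanSpace ℝ (Fin d) →L[ℝ] EuclideanSpace ℝ (Fin d))
    (hH : ∀ a b : EuclideanSpace ℝ (Fin d), ⟪H a, b⟫ = ⟪a, H b⟫)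
    (bv : EuclideanSpace ℝ (Fin d)) (c : ℝ) (x₀ : EuclideanSpace ℝ (Fin d))
    (ftilde : EuclideanSpace ℝ (Fin d) → ℝ)
    (hf : ∀ z, ftilde z = c + ⟪bv, z - x₀⟫ + (1 / 2) * ⟪z - x₀, H (z - x₀)⟫)
    (hgrad : ∀ z, gradient ftilde z = bv + H (z - x₀))
    (γ₀ β : ℝ) (hγ₀ : 0 ≤ γ₀) (hγβ : γ₀ ≤ β)
    (hlow : ∀ v : EuclideanSpace ℝ (Fin d), -γ₀ * ‖v‖ ^ 2 ≤ ⟪v, H v⟫)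
    (hup : ∀ v : EuclideanSpace ℝ (Fin d), ⟪v, H v⟫ ≤ β * ‖v‖ ^ 2)
    (η u Qt : ℝ) (hη : 0 < η) (hηβ : η * β < 1) (hQt : 0 ≤ Qt)
    (x x' g : EuclideanSpace ℝ (Fin d))
    (hg : ‖g - gradient ftilde x‖ ≤ Qt)
    (hx' : x' = x - (η + u) • g) :
    ‖gradient ftilde x'‖ ≤
      (1 + η * γ₀ + β * |u|) * ‖gradient ftilde x‖ + β * Qt * (η + |u|) := by
  have hβ : 0 ≤ β := le_trans hγ₀ hγβ
  set G := gradient ftilde x with hG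
  set e := g - G with he
  -- bound on ‖H v‖
  have hHbound : ∀ v : EuclideanSpace ℝ (Fin d), ‖H v‖ ≤ β * ‖v‖ := by
    apply sym_op_norm_bound H hH β hβ
    intro v
    rw [abs_le]
    constructor
    · have := hlow v
      nlinarith [sq_nonneg ‖v‖]
    · exact hup v
  -- the operator I - η H
  set A : EuclideanSpace ℝ (Fin d) →L[ℝ] EuclideanSpace ℝ (Fin d) :=
    ContinuousLinearMap.id ℝ _ - η • H with hAdef
  have hAapp : ∀ v, A v = v - η • H v := by intro v; simp [hAdef]
  have hAsym : ∀ a b : EuclideanSpace ℝ (Fin d), ⟪A a, b⟫ = ⟪a, A b⟫ := by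
    intro a b
    simp only [hAapp, inner_sub_left, inner_sub_right, real_inner_smul_left,
      real_inner_smul_right, hH a b, real_inner_comm a b]
  have hAbound : ∀ v : EuclideanSpace ℝ (Fin d), ‖A v‖ ≤ (1 + η * γ₀) * ‖v‖ := by
    apply sym_op_norm_bound A hAsym (1 + η * γ₀) (by positivity)
    intro v
    have hv1 : ⟪v, A v⟫ = ‖v‖ ^ 2 - η * ⟪v, H v⟫ := by
      rw [hAapp, inner_sub_right, real_inner_smul_right, real_inner_self_eq_norm_sq]
    rw [hv1, abs_le]
    have h1 := hlow v
    have h2 := hup v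
    constructor
    · nlinarith [sq_nonneg ‖v‖]
    · nlinarith [sq_nonneg ‖v‖]
  -- gradient at x'
  have hgx' : gradient ftilde x' = A G - u • H G - (η + u) • H e := by
    rw [hgrad, hx']
    have hGx : G = bv + H (x - x₀) := by rw [hG, hgrad]
    have hHe : H e = H g - H G := by rw [he, map_sub]
    have hexp : x - (η + u) • g - x₀ = (x - x₀) - (η + u) • g := by abel
    rw [hexp, map_sub, map_smul, hAapp, hHe]
    have hx0 : H (x - x₀) = G - bv := by rw [hGx]; abel
    rw [hx0]
    module
  rw [hgx']
  have t1 : ‖A G - u • H G - (η + u) • H e‖ ≤ ‖A G‖ + ‖u • H G‖ + ‖(η + u) • H e‖ := by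
    calc ‖A G - u • H G - (η + u) • H e‖
        ≤ ‖A G - u • H G‖ + ‖(η + u) • H e‖ := norm_sub_le _ _
      _ ≤ ‖A G‖ + ‖u • H G‖ + ‖(η + u) • H e‖ := by
          have := norm_sub_le (A G) (u • H G); linarith
  have b1 : ‖A G‖ ≤ (1 + η * γ₀) * ‖G‖ := hAbound G
  have b2 : ‖u • H G‖ ≤ |u| * (β * ‖G‖) := by
    rw [norm_smul, Real.norm_eq_abs]
    exact mul_le_mul_of_nonneg_left (hHbound G) (abs_nonneg u)
  have b3 : ‖(η + u) • H e‖ ≤ (η + |u|) * (β * Qt) := by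
    rw [norm_smul, Real.norm_eq_abs]
    have h1 : |η + u| ≤ η + |u| := by
      calc |η + u| ≤ |η| + |u| := abs_add_le _ _
        _ = η + |u| := by rw [abs_of_pos hη]
    have h2 : ‖H e‖ ≤ β * Qt := by
      calc ‖H e‖ ≤ β * ‖e‖ := hHbound e
        _ ≤ β * Qt := mul_le_mul_of_nonneg_left hg hβ
    have h3 : 0 ≤ η + |u| := by positivity
    calc |η + u| * ‖H e‖ ≤ (η + |u|) * ‖H e‖ :=
          mul_le_mul_of_nonneg_right h1 (norm_nonneg _)
      _ ≤ (η + |u|) * (β * Qt) := mul_le_mul_of_nonneg_left h2 h3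
  nlinarith [norm_nonneg G]
end

section
/- One-step expected contraction near a local minimum: let f : ℝ^d → ℝ be β-smooth, let x* satisfy ∇f(x*) = 0, and let x ∈ ℝ^d satisfy ⟨∇f(x), x − x*⟩ ≥ α ‖x − x*‖² with α > 0. Assume L_max < α/β². Let x' = x − (η_c + u) g. Then E[‖x' − x*‖²] ≤ (1 + (5/3) α L_max) ‖x − x*‖² + (5/3) L_max² σ². -/
/-!
Write `v = x - x*` and `η = ηc + u`, which is uniform on `[Lmin, Lmax]`. Expanding the square and
using the independence of `η` and `g`,
`E‖x' - x*‖² = ‖v‖² - 2 E[η] ⟪v, ∇f x⟫ + E[η²] E‖g‖²`.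
The cross term is nonpositive by the one-point convexity hypothesis,
`E[η²] = (Lmin² + Lmin Lmax + Lmax²) / 3 ≤ Lmax²`, and since `∇f x* = 0`, smoothness gives
`E‖g‖² = E‖g - ∇f x‖² + ‖∇f x‖² ≤ σ² + β² ‖v‖²`. Finally `β² Lmax < α`.
-/

open MeasureTheory ProbabilityTheory
open scoped RealInnerProductSpace

namespace MeasureTheory.pdf.IsUniform

variable {Ω : Type*} [MeasurableSpace Ω] {μ : Measure Ω} {u : Ω → ℝ} {a b c : ℝ} {h : ℝ → ℝ}

lemma integrable_comp_Icc (hab : a < b) (hu : IsUniform u (Set.Icc a b) μ) (hh : Continuous h) :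
    Integrable (fun ω => h (u ω)) μ := by
  have hu_meas : AEMeasurable u μ := hu.aemeasurable (by simp [hab]) (by simp)
  refine (integrable_map_measure hh.aestronglyMeasurable hu_meas).mp ?_
  rw [hu]
  exact hh.integrableOn_Icc.smul_measure (by simp [hab])

lemma integral_comp_Icc (hab : a < b) (hu : IsUniform u (Set.Icc a b) μ) (hh : Continuous h) :
    ∫ ω, h (u ω) ∂μ = (b - a)⁻¹ * ∫ t in a..b, h t := by
  have hu_meas : AEMeasurable u μ := hu.aemeasurable (by simp [hab]) (by simp)
  rw [← integral_map hu_meas hh.aestronglyMeasurable, hu, ProbabilityTheory.cond,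
    integral_smul_measure, integral_Icc_eq_integral_Ioc, ← intervalIntegral.integral_of_le hab.le]
  simp [hab.le]

lemma integral_comp_const_add (hab : a < b) (hu : IsUniform u (Set.Icc (a - c) (b - c)) μ)
    (hh : Continuous h) :
    ∫ ω, h (c + u ω) ∂μ = (b - a)⁻¹ * ∫ t in a..b, h t := by
  rw [integral_comp_Icc (h := fun t => h (c + t)) (by linarith) hu (hh.comp (continuous_const_add c)),
    intervalIntegral.integral_comp_add_left h c]
  simp

lemma integral_const_add (hab : a < b) (hu : IsUniform u (Set.Icc (a - c) (b - c)) μ) :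
    ∫ ω, (c + u ω) ∂μ = (a + b) / 2 := by
  rw [integral_comp_const_add (h := fun t => t) hab hu continuous_id, integral_id]
  field_simp [(sub_pos.2 hab).ne']
  ring

lemma integral_const_add_sq (hab : a < b) (hu : IsUniform u (Set.Icc (a - c) (b - c)) μ) :
    ∫ ω, (c + u ω) ^ 2 ∂μ = (a ^ 2 + a * b + b ^ 2) / 3 := by
  rw [integral_comp_const_add (h := (· ^ 2)) hab hu (continuous_pow 2), integral_pow]
  field_simp [(sub_pos.2 hab).ne']
  ring

end MeasureTheory.pdf.IsUniform

lemma norm_sub_smul_sq {E : Type*} [NormedAddCommGroup E] [InnerProductSpace ℝ E]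
    (v y : E) (t : ℝ) :
    ‖v - t • y‖ ^ 2 = ‖v‖ ^ 2 - 2 * (t * ⟪v, y⟫) + t ^ 2 * ‖y‖ ^ 2 := by
  rw [norm_sub_sq_real, real_inner_smul_right, norm_smul, mul_pow, Real.norm_eq_abs, sq_abs]

section RandomStep

variable {Ω E : Type*} [MeasurableSpace Ω] {μ : Measure Ω} [IsProbabilityMeasure μ]
  [NormedAddCommGroup E] [InnerProductSpace ℝ E] [CompleteSpace E]
  [MeasurableSpace E] [BorelSpace E] {s : Ω → ℝ} {g : Ω → E}

lemma ProbabilityTheory.IndepFun.integral_norm_sub_smul_sq (hsg : IndepFun s g μ)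
    (hs : Integrable s μ) (hs2 : Integrable (fun ω => s ω ^ 2) μ) (hg : Integrable g μ)
    (hg2 : Integrable (fun ω => ‖g ω‖ ^ 2) μ) (v : E) :
    ∫ ω, ‖v - s ω • g ω‖ ^ 2 ∂μ =
      ‖v‖ ^ 2 - 2 * ((∫ ω, s ω ∂μ) * ⟪v, ∫ ω, g ω ∂μ⟫) +
        (∫ ω, s ω ^ 2 ∂μ) * ∫ ω, ‖g ω‖ ^ 2 ∂μ := by
  have h_inner : IndepFun s (fun ω => ⟪v, g ω⟫) μ :=
    hsg.comp measurable_id (continuous_const.inner continuous_id).measurable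
  have h_sq : IndepFun (fun ω => s ω ^ 2) (fun ω => ‖g ω‖ ^ 2) μ :=
    hsg.comp (measurable_id.pow_const 2) (measurable_norm.pow_const 2)
  have hg_inner : Integrable (fun ω => ⟪v, g ω⟫) μ := hg.const_inner v
  have h_cross : Integrable (fun ω => 2 * (s ω * ⟪v, g ω⟫)) μ :=
    (h_inner.integrable_mul hs hg_inner).const_mul 2
  have h_lin : Integrable (fun ω => ‖v‖ ^ 2 - 2 * (s ω * ⟪v, g ω⟫)) μ :=
    (integrable_const _).sub h_cross
  have h_quad : Integrable (fun ω => s ω ^ 2 * ‖g ω‖ ^ 2) μ := h_sq.integrable_mul hs2 hg2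
  simp_rw [norm_sub_smul_sq]
  rw [integral_add h_lin h_quad, integral_sub (integrable_const _) h_cross, integral_const_mul,
    integral_const, h_inner.integral_fun_mul_eq_mul_integral hs.1 hg_inner.1, integral_inner hg,
    h_sq.integral_fun_mul_eq_mul_integral hs2.1 hg2.1]
  simp

lemma integral_norm_sub_integral_sq (hg : Integrable g μ)
    (hg2 : Integrable (fun ω => ‖g ω‖ ^ 2) μ) :
    ∫ ω, ‖g ω - ∫ ω, g ω ∂μ‖ ^ 2 ∂μ = ∫ ω, ‖g ω‖ ^ 2 ∂μ - ‖∫ ω, g ω ∂μ‖ ^ 2 := by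
  have h := (indepFun_const_left (μ := μ) (1 : ℝ) g).integral_norm_sub_smul_sq
    (integrable_const 1) (integrable_const (1 ^ 2)) hg hg2 (∫ ω, g ω ∂μ)
  simp only [one_smul, one_pow, integral_const, probReal_univ, smul_eq_mul, one_mul,
    real_inner_self_eq_norm_sq] at h
  simp_rw [norm_sub_rev (g _)]
  linarith

lemma ProbabilityTheory.IndepFun.integral_norm_sub_smul_sq_le (hsg : IndepFun s g μ)
    (hs : Integrable s μ) (hs2 : Integrable (fun ω => s ω ^ 2) μ) (hg : Integrable g μ)
    (hg2 : Integrable (fun ω => ‖g ω‖ ^ 2) μ) {v : E} {M σ : ℝ}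
    (h_drift : 0 ≤ (∫ ω, s ω ∂μ) * ⟪v, ∫ ω, g ω ∂μ⟫) (h_second : ∫ ω, s ω ^ 2 ∂μ ≤ M)
    (h_var : ∫ ω, ‖g ω - ∫ ω, g ω ∂μ‖ ^ 2 ∂μ ≤ σ ^ 2) :
    ∫ ω, ‖v - s ω • g ω‖ ^ 2 ∂μ ≤ ‖v‖ ^ 2 + M * (σ ^ 2 + ‖∫ ω, g ω ∂μ‖ ^ 2) := by
  have h_moment : ∫ ω, ‖g ω‖ ^ 2 ∂μ ≤ σ ^ 2 + ‖∫ ω, g ω ∂μ‖ ^ 2 := by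
    linarith [integral_norm_sub_integral_sq hg hg2]
  rw [hsg.integral_norm_sub_smul_sq hs hs2 hg hg2]
  have : (∫ ω, s ω ^ 2 ∂μ) * ∫ ω, ‖g ω‖ ^ 2 ∂μ ≤ M * (σ ^ 2 + ‖∫ ω, g ω ∂μ‖ ^ 2) :=
    mul_le_mul h_second h_moment (integral_nonneg fun ω => by positivity)
      (h_second.trans' (integral_nonneg fun ω => by positivity))
  linarith

end RandomStep

lemma mul_lt_of_lt_div_sq {L α β : ℝ} (hL : 0 < L) (h : L < α / β ^ 2) : β ^ 2 * L < α := by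
  rcases eq_or_ne β 0 with rfl | hβ
  · simp only [ne_eq, OfNat.ofNat_ne_zero, not_false_eq_true, zero_pow, div_zero] at h
    linarith
  · rwa [lt_div_iff₀ (by positivity), mul_comm] at h

theorem sgd_plrs_contraction_near_minimum_general
    {Ω : Type} [MeasurableSpace Ω] (μ : Measure Ω) [IsProbabilityMeasure μ]
    {d : ℕ} (f : EuclideanSpace ℝ (Fin d) → ℝ) (α β σ : ℝ)
    (hsmooth : ∀ a b : EuclideanSpace ℝ (Fin d),
      ‖gradient f a - gradient f b‖ ≤ β * ‖a - b‖)
    (xs x : EuclideanSpace ℝ (Fin d))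
    (hxs : gradient f xs = 0)
    (hconv : α * ‖x - xs‖ ^ 2 ≤ ⟪gradient f x, x - xs⟫)
    (Lmin Lmax ηc : ℝ)
    (hLmin : 0 < Lmin) (hLL : Lmin < Lmax)
    (hLαβ : Lmax < α / β ^ 2)
    (hηc : ηc = (Lmin + Lmax) / 2)
    (u : Ω → ℝ) (g : Ω → EuclideanSpace ℝ (Fin d))
    (hu : pdf.IsUniform u (Set.Icc (Lmin - ηc) (Lmax - ηc)) μ volume)
    (hindep : IndepFun u g μ)
    (hg_int : Integrable g μ)
    (hg2_int : Integrable (fun ω => ‖g ω‖ ^ 2) μ)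
    (hg_mean : ∫ ω, g ω ∂μ = gradient f x)
    (hσ : ∫ ω, ‖g ω - gradient f x‖ ^ 2 ∂μ ≤ σ ^ 2)
    (x' : Ω → EuclideanSpace ℝ (Fin d))
    (hx' : ∀ ω, x' ω = x - (ηc + u ω) • g ω) :
    ∫ ω, ‖x' ω - xs‖ ^ 2 ∂μ ≤
      (1 + (5 / 3) * α * Lmax) * ‖x - xs‖ ^ 2 + (5 / 3) * Lmax ^ 2 * σ ^ 2 := by
  set v := x - xs
  set m := gradient f x
  have hLmax : 0 < Lmax := hLmin.trans hLL
  have hβLα : β ^ 2 * Lmax < α := mul_lt_of_lt_div_sq hLmax hLαβ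
  have hm : ‖m‖ ^ 2 ≤ β ^ 2 * ‖v‖ ^ 2 := by
    simpa [hxs, mul_pow] using pow_le_pow_left₀ (norm_nonneg _) (hsmooth x xs) 2
  have hvm : 0 ≤ ⟪v, m⟫ :=
    real_inner_comm m v ▸ hconv.trans' (by nlinarith [sq_nonneg β, sq_nonneg ‖v‖])
  have hab : Lmin - ηc < Lmax - ηc := by linarith
  have hE1 : ∫ ω, (ηc + u ω) ∂μ = ηc := by rw [hu.integral_const_add hLL, hηc]
  have hE2 : ∫ ω, (ηc + u ω) ^ 2 ∂μ ≤ Lmax ^ 2 := by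
    rw [hu.integral_const_add_sq hLL]; nlinarith
  have hindep_step : IndepFun (fun ω => ηc + u ω) g μ :=
    hindep.comp (measurable_const_add ηc) measurable_id
  have hstep := hindep_step.integral_norm_sub_smul_sq_le
    (hu.integrable_comp_Icc hab (continuous_const_add ηc))
    (hu.integrable_comp_Icc hab ((continuous_const_add ηc).pow 2)) hg_int hg2_int
    (v := v) (by rw [hE1, hg_mean]; exact mul_nonneg (by linarith) hvm) hE2
    (by rwa [hg_mean])
  calc ∫ ω, ‖x' ω - xs‖ ^ 2 ∂μ = ∫ ω, ‖v - (ηc + u ω) • g ω‖ ^ 2 ∂μ := by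
        simp only [hx', sub_right_comm x _ xs, v]
    _ ≤ ‖v‖ ^ 2 + Lmax ^ 2 * (σ ^ 2 + ‖m‖ ^ 2) := by simpa only [hg_mean] using hstep
    _ ≤ (1 + (5 / 3) * α * Lmax) * ‖v‖ ^ 2 + (5 / 3) * Lmax ^ 2 * σ ^ 2 := by
        have := mul_le_mul_of_nonneg_right hβLα.le (by positivity : 0 ≤ Lmax * ‖v‖ ^ 2)
        nlinarith [sq_nonneg σ, sq_nonneg ‖v‖]

/-- **One-step expected contraction near a local minimum.** Let `f` be `β`-smooth with
`∇f(x*) = 0`, let `x` satisfy `⟪∇f(x), x - x*⟫ ≥ α ‖x - x*‖²` with `α > 0`, and assume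
`Lmax < α/β²`. For one SGD-PLRS step `x' = x - (ηc + u) • g`,
`E[‖x' - x*‖²] ≤ (1 + (5/3) α Lmax) ‖x - x*‖² + (5/3) Lmax² σ²`. -/
theorem sgd_plrs_contraction_near_minimum
    {Ω : Type} [MeasurableSpace Ω] (μ : Measure Ω) [IsProbabilityMeasure μ]
    {d : ℕ} (f : EuclideanSpace ℝ (Fin d) → ℝ) (α β σ : ℝ)
    (hα : 0 < α) (hβ : 0 ≤ β)
    (hdiff : Differentiable ℝ f)
    (hsmooth : ∀ a b : EuclideanSpace ℝ (Fin d),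
      ‖gradient f a - gradient f b‖ ≤ β * ‖a - b‖)
    (xs x : EuclideanSpace ℝ (Fin d))
    (hxs : gradient f xs = 0)
    (hconv : α * ‖x - xs‖ ^ 2 ≤ ⟪gradient f x, x - xs⟫)
    (Lmin Lmax ηc : ℝ)
    (hLmin : 0 < Lmin) (hLL : Lmin < Lmax) (hLmax : Lmax < 1)
    (hLαβ : Lmax < α / β ^ 2)
    (hηc : ηc = (Lmin + Lmax) / 2)
    (u : Ω → ℝ) (g : Ω → EuclideanSpace ℝ (Fin d))
    (hu : pdf.IsUniform u (Set.Icc (Lmin - ηc) (Lmax - ηc)) μ volume)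
    (hindep : IndepFun u g μ)
    (hg_int : Integrable g μ)
    (hg2_int : Integrable (fun ω => ‖g ω‖ ^ 2) μ)
    (hg_mean : ∫ ω, g ω ∂μ = gradient f x)
    (hσ : ∫ ω, ‖g ω - gradient f x‖ ^ 2 ∂μ ≤ σ ^ 2)
    (x' : Ω → EuclideanSpace ℝ (Fin d))
    (hx' : ∀ ω, x' ω = x - (ηc + u ω) • g ω) :
    ∫ ω, ‖x' ω - xs‖ ^ 2 ∂μ ≤
      (1 + (5 / 3) * α * Lmax) * ‖x - xs‖ ^ 2 + (5 / 3) * Lmax ^ 2 * σ ^ 2 :=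
  sgd_plrs_contraction_near_minimum_general μ f α β σ hsmooth xs x hxs hconv Lmin Lmax ηc hLmin hLL
    hLαβ hηc u g hu hindep hg_int hg2_int hg_mean hσ x' hx'
end

section
/- Recursion for the gradient gap between the true process and its quadratic model: with the definitions below, for every t ≥ 1, Δ_t = (I − η H(x₀)) Δ_{t−1} − H(x₀)(w_{t−1} − w̃_{t−1}) − H'_{t−1}(η Δ_{t−1} + η ∇f̃(x̃_{t−1})) − H'_{t−1} w_{t−1} + θ_{t−1}. -/
/-!
Along the step `u = x_{t+1} - x_t`, Taylor's formula with integral remainder for the gradient gives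
`∇f(x_{t+1}) = ∇f(x_t) + H(x_t) u + θ_t`, while the quadratic model moves exactly by
`H(x₀)(x̃_{t+1} - x̃_t)`. Substituting both update rules and splitting `H(x_t) = H(x₀) + H'_t`
turns the difference into the stated linear identity.
-/

open InnerProductSpace

/-- The Hessian of `f`, as the Fréchet derivative of the gradient. -/
noncomputable def Hess {d : ℕ} (f : EuclideanSpace ℝ (Fin d) → ℝ)
    (x : EuclideanSpace ℝ (Fin d)) :
    EuclideanSpace ℝ (Fin d) →L[ℝ] EuclideanSpace ℝ (Fin d) :=
  fderiv ℝ (gradient f) x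

section Taylor

variable {E F : Type*} [NormedAddCommGroup E] [NormedSpace ℝ E]
  [NormedAddCommGroup F] [NormedSpace ℝ F] [CompleteSpace F] {g : E → F}

theorem ContDiff.map_add_eq_add_integral_fderiv (hg : ContDiff ℝ 1 g) (a u : E) :
    g (a + u) = g a + ∫ v in (0:ℝ)..1, fderiv ℝ g (a + v • u) u := by
  simpa using map_add_eq_sum_add_integral_iteratedFDeriv (n := 0) (x := a) (y := u)
    fun v _ ↦ hg.contDiffAt

theorem ContDiff.map_add_eq_add_fderiv_add_integral (hg : ContDiff ℝ 1 g) (a u : E) :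
    g (a + u) = g a + fderiv ℝ g a u
      + (∫ v in (0:ℝ)..1, (fderiv ℝ g (a + v • u) - fderiv ℝ g a)) u := by
  have hcont : Continuous fun v : ℝ ↦ fderiv ℝ g (a + v • u) :=
    (hg.continuous_fderiv one_ne_zero).comp (by fun_prop)
  have hint : IntervalIntegrable (fun v : ℝ ↦ fderiv ℝ g (a + v • u) - fderiv ℝ g a)
      MeasureTheory.volume 0 1 :=
    (hcont.sub continuous_const).intervalIntegrable 0 1
  rw [ContinuousLinearMap.intervalIntegral_apply hint]
  simp only [sub_apply]
  rw [intervalIntegral.integral_sub ((hcont.clm_apply continuous_const).intervalIntegrable 0 1)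
      intervalIntegrable_const, intervalIntegral.integral_const,
    hg.map_add_eq_add_integral_fderiv]
  simp

end Taylor

theorem ContDiff.gradient_right {F : Type*} [NormedAddCommGroup F] [InnerProductSpace ℝ F]
    [CompleteSpace F] {f : F → ℝ} {m n : WithTop ℕ∞} (hf : ContDiff ℝ n f) (hmn : m + 1 ≤ n) :
    ContDiff ℝ m (gradient f) :=
  (toDual ℝ F).symm.contDiff.comp (hf.fderiv_right hmn)

theorem gradient_gap_recursion_general {d : ℕ}
    (f : EuclideanSpace ℝ (Fin d) → ℝ)
    (hf : ContDiff ℝ 2 f)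
    (x₀ : EuclideanSpace ℝ (Fin d)) (η : ℝ)
    (w wt x xt : ℕ → EuclideanSpace ℝ (Fin d))
    (hx : ∀ t, x (t + 1) = x t - η • gradient f (x t) - w t)
    (hxt : ∀ t, xt (t + 1) =
      xt t - η • (gradient f x₀ + Hess f x₀ (xt t - x₀)) - wt t) :
    ∀ t,
      (gradient f (x (t + 1)) - (gradient f x₀ + Hess f x₀ (xt (t + 1) - x₀))) =
        ((gradient f (x t) - (gradient f x₀ + Hess f x₀ (xt t - x₀)))
            - η • Hess f x₀ (gradient f (x t) - (gradient f x₀ + Hess f x₀ (xt t - x₀))))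
          - Hess f x₀ (w t - wt t)
          - (Hess f (x t) - Hess f x₀)
              (η • (gradient f (x t) - (gradient f x₀ + Hess f x₀ (xt t - x₀)))
                + η • (gradient f x₀ + Hess f x₀ (xt t - x₀)))
          - (Hess f (x t) - Hess f x₀) (w t)
          + (∫ v in (0:ℝ)..1, (Hess f (x t + v • (x (t + 1) - x t)) - Hess f (x t)))
              (x (t + 1) - x t) := by
  intro t
  have htaylor : gradient f (x (t + 1)) = gradient f (x t) + Hess f (x t) (x (t + 1) - x t)
      + (∫ v in (0:ℝ)..1, (Hess f (x t + v • (x (t + 1) - x t)) - Hess f (x t)))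
          (x (t + 1) - x t) := by
    unfold Hess
    simpa only [add_sub_cancel] using
      (hf.gradient_right (by norm_num)).map_add_eq_add_fderiv_add_integral (x t) (x (t + 1) - x t)
  have hstep : x (t + 1) - x t = -(η • gradient f (x t)) - w t := by rw [hx t]; abel
  have hmodel : xt (t + 1) - x₀ =
      (xt t - x₀) - η • (gradient f x₀ + Hess f x₀ (xt t - x₀)) - wt t := by
    rw [hxt t]; abel
  rw [htaylor, hmodel, hstep]
  simp only [map_sub, map_add, map_neg, map_smul, sub_apply]
  module

/-- **Recursion for the gradient gap between the true process and its quadratic model.**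
With `f̃` the second-order Taylor expansion of `f` at `x₀` (so
`∇f̃(z) = ∇f(x₀) + H(x₀)(z - x₀)`), iterates `x_{t+1} = x_t - η ∇f(x_t) - w_t` and
`x̃_{t+1} = x̃_t - η ∇f̃(x̃_t) - w̃_t` with `x̃₀ = x₀`,
`Δ_t = ∇f(x_t) - ∇f̃(x̃_t)`, `H'_t = H(x_t) - H(x₀)` and
`θ_t = (∫₀¹ (H(x_t + v(x_{t+1} - x_t)) - H(x_t)) dv)(x_{t+1} - x_t)`, one has for all `t`:
`Δ_{t+1} = (I - η H(x₀)) Δ_t - H(x₀)(w_t - w̃_t) - H'_t (η Δ_t + η ∇f̃(x̃_t)) - H'_t w_t + θ_t`. -/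
theorem gradient_gap_recursion {d : ℕ}
    (f : EuclideanSpace ℝ (Fin d) → ℝ)
    (hf : ContDiff ℝ 2 f)
    (x₀ : EuclideanSpace ℝ (Fin d)) (η : ℝ)
    (w wt x xt : ℕ → EuclideanSpace ℝ (Fin d))
    (hx : ∀ t, x (t + 1) = x t - η • gradient f (x t) - w t)
    (hxt0 : xt 0 = x₀)
    (hxt : ∀ t, xt (t + 1) =
      xt t - η • (gradient f x₀ + Hess f x₀ (xt t - x₀)) - wt t) :
    ∀ t,
      (gradient f (x (t + 1)) - (gradient f x₀ + Hess f x₀ (xt (t + 1) - x₀))) =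
        ((gradient f (x t) - (gradient f x₀ + Hess f x₀ (xt t - x₀)))
            - η • Hess f x₀ (gradient f (x t) - (gradient f x₀ + Hess f x₀ (xt t - x₀))))
          - Hess f x₀ (w t - wt t)
          - (Hess f (x t) - Hess f x₀)
              (η • (gradient f (x t) - (gradient f x₀ + Hess f x₀ (xt t - x₀)))
                + η • (gradient f x₀ + Hess f x₀ (xt t - x₀)))
          - (Hess f (x t) - Hess f x₀) (w t)
          + (∫ v in (0:ℝ)..1, (Hess f (x t + v • (x (t + 1) - x t)) - Hess f (x t)))
              (x (t + 1) - x t) :=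
  gradient_gap_recursion_general f hf x₀ η w wt x xt hx hxt
end
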